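/- arXiv:2412.20600 — 6 statements merged into one kernel-verified Lean document; each statement's English description precedes it below -/
import Mathlib

section
/- Let 𝔤 be a Lie algebra, 𝔦 an ideal of dimension k, and (𝔦_t) a smooth curve of ideals of 𝔤 with 𝔦₀ = 𝔦, realized by a smooth curve α(t) ∈ GL(𝔤) with α(0) = id and α(t)(𝔦) = 𝔦_t. Then the linear map η: 𝔦 → 𝔤/𝔦 given by η(u) = π(α'(0)(u)) satisfies the 0-cocycle condition: for all x ∈ 𝔤 and u ∈ 𝔦, π([x, α'(0)(u)]) = η([x, u]), i.e. ad^Hom_x(η) = 0 for all x ∈ 𝔤. -/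
/-!
Pulled back along `α t`, the curve `t ↦ [x, α t u]` becomes `t ↦ (α t)⁻¹ [x, α t u]`, which stays in
the fixed subspace `𝔦` because every `𝔦_t` is an ideal. Its derivative at `0`,
`[x, α'(0) u] - α'(0) [x, u]`, therefore lies in the closed subspace `𝔦`.
-/

open Set

section

variable {𝕜 : Type*} [NontriviallyNormedField 𝕜]
  {E F : Type*} [NormedAddCommGroup E] [NormedSpace 𝕜 E] [NormedAddCommGroup F] [NormedSpace 𝕜 F]

theorem HasDerivAt.mem_of_forall_mem {S : Submodule 𝕜 F} (hS : IsClosed (S : Set F))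
    {f : 𝕜 → F} {f' : F} {x : 𝕜} (hf : HasDerivAt f f' x) (hmem : ∀ t, f t ∈ S) : f' ∈ S := by
  have hspan : Submodule.span 𝕜 (f '' univ) ≤ S :=
    Submodule.span_le.2 (image_subset_iff.2 fun t _ => hmem t)
  rw [← hf.deriv]
  exact closure_minimal hspan hS (range_deriv_subset_closure_span_image f dense_univ ⟨x, rfl⟩)

theorem hasDerivAt_clm_of_forall_apply [CompleteSpace 𝕜] [FiniteDimensional 𝕜 E]
    {A : 𝕜 → E →L[𝕜] F} {A' : E →L[𝕜] F} {x : 𝕜}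
    (h : ∀ u, HasDerivAt (fun t => A t u) (A' u) x) : HasDerivAt A A' x := by
  let d := Module.finrank 𝕜 E
  let e₁ := ContinuousLinearEquiv.ofFinrankEq (Module.finrank_fin_fun 𝕜 (n := d)).symm
  let e := (e₁.arrowCongr (1 : F ≃L[𝕜] F)).trans (ContinuousLinearEquiv.piRing (Fin d))
  have hcoord : HasDerivAt (fun t => e (A t)) (e A') x :=
    hasDerivAt_pi.2 fun i => h _
  simpa [Function.comp_def] using e.symm.hasFDerivAt.comp_hasDerivAt x hcoord

variable [CompleteSpace E]

theorem HasDerivAt.ringInverse_of_eq_one {A : 𝕜 → E →L[𝕜] E} {A' : E →L[𝕜] E} {x : 𝕜}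
    (hA : HasDerivAt A A' x) (hx : A x = 1) :
    HasDerivAt (fun t => Ring.inverse (A t)) (-A') x := by
  have hinv := hasFDerivAt_ringInverse (𝕜 := 𝕜) (1 : (E →L[𝕜] E)ˣ)
  rw [Units.val_one, ← hx] at hinv
  simpa [Function.comp_def] using hinv.comp_hasDerivAt x hA

theorem apply_deriv_sub_deriv_apply_mem {S : Submodule 𝕜 E} (hS : IsClosed (S : Set E))
    {A : 𝕜 → E →L[𝕜] E} {A' : E →L[𝕜] E} {x : 𝕜} (hA : HasDerivAt A A' x) (hx : A x = 1)
    (hunit : ∀ t, IsUnit (A t)) (B : E →L[𝕜] E) {u : E}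
    (hB : ∀ t, B (A t u) ∈ S.map (A t : E →ₗ[𝕜] E)) : B (A' u) - A' (B u) ∈ S := by
  have hBA : HasDerivAt (fun t => B (A t u)) (B (A' u)) x := by
    simpa [Function.comp_def] using
      B.hasFDerivAt.comp_hasDerivAt x (hA.clm_apply (hasDerivAt_const x u))
  have hpullback : ∀ t, Ring.inverse (A t) (B (A t u)) ∈ S := by
    intro t
    obtain ⟨v, hv, hAv⟩ := hB t
    rw [← hAv, ContinuousLinearMap.coe_coe, ← mul_apply_eq_comp,
      Ring.inverse_mul_cancel _ (hunit t), one_apply_eq_self]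
    exact hv
  have := ((hA.ringInverse_of_eq_one hx).clm_apply hBA).mem_of_forall_mem hS hpullback
  simp only [hx, one_apply_eq_self, Ring.inverse_one, neg_apply] at this
  rwa [sub_eq_neg_add]

end

theorem statement4_general {L : Type*} [NormedAddCommGroup L] [NormedSpace ℝ L]
    [FiniteDimensional ℝ L]
    (β : L →ₗ[ℝ] L →ₗ[ℝ] L)
    (I : Submodule ℝ L)
    (α : ℝ → (L →ₗ[ℝ] L)) (D : L →ₗ[ℝ] L)
    (hα0 : α 0 = LinearMap.id)
    (hbij : ∀ t : ℝ, Function.Bijective (α t))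
    (hidealt : ∀ (t : ℝ) (x y : L), y ∈ I.map (α t) → β x y ∈ I.map (α t))
    (hderiv : ∀ u : L, HasDerivAt (fun t : ℝ => α t u) (D u) 0) :
    ∀ x u : L, u ∈ I →
      (Submodule.Quotient.mk (β x (D u)) : L ⧸ I) = Submodule.Quotient.mk (D (β x u)) := by
  intro x u hu
  let A : ℝ → L →L[ℝ] L := fun t => (α t).toContinuousLinearMap
  have hA : HasDerivAt A D.toContinuousLinearMap 0 := hasDerivAt_clm_of_forall_apply hderiv
  have hA0 : A 0 = 1 := by ext v; simp [A, hα0]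
  have hunit (t : ℝ) : IsUnit (A t) := ContinuousLinearMap.isUnit_iff_bijective.2 (hbij t)
  rw [Submodule.Quotient.eq]
  exact apply_deriv_sub_deriv_apply_mem I.closed_of_finiteDimensional hA hA0 hunit
    (β x).toContinuousLinearMap fun t => hidealt t x _ (Submodule.mem_map_of_mem hu)

/-- Let `(𝔤, β)` be a finite-dimensional real Lie algebra (`β` the Lie bracket, given as a
skew-symmetric bilinear map satisfying the Jacobi identity), `𝔦 ⊆ 𝔤` an ideal, and
`(𝔦_t = α(t)(𝔦))_t` a smooth deformation of `𝔦` through ideals of `𝔤`, realized by a curve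
`α(t)` of linear automorphisms with `α(0) = id` and derivative `D = α'(0)` at `0`.
Then `η := π ∘ D|_𝔦 : 𝔦 → 𝔤/𝔦` is a `0`-cocycle: for all `x ∈ 𝔤` and `u ∈ 𝔦`,
`π(β(x, D u)) = η(β(x, u))`, i.e. `ad^Hom_x(η) = 0`. -/
theorem statement4 {L : Type*} [NormedAddCommGroup L] [NormedSpace ℝ L]
    [FiniteDimensional ℝ L]
    (β : L →ₗ[ℝ] L →ₗ[ℝ] L)
    (hskew : ∀ x y : L, β x y = -β y x)
    (hjac : ∀ x y z : L, β (β x y) z + β (β y z) x + β (β z x) y = 0)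
    (I : Submodule ℝ L)
    (hI : ∀ x u : L, u ∈ I → β x u ∈ I)
    (α : ℝ → (L →ₗ[ℝ] L)) (D : L →ₗ[ℝ] L)
    (hα0 : α 0 = LinearMap.id)
    (hbij : ∀ t : ℝ, Function.Bijective (α t))
    (hidealt : ∀ (t : ℝ) (x y : L), y ∈ I.map (α t) → β x y ∈ I.map (α t))
    (hderiv : ∀ u : L, HasDerivAt (fun t : ℝ => α t u) (D u) 0) :
    ∀ x u : L, u ∈ I →
      (Submodule.Quotient.mk (β x (D u)) : L ⧸ I) = Submodule.Quotient.mk (D (β x u)) :=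
  statement4_general β I α D hα0 hbij hidealt hderiv
end

section
/- Let 𝔦 be an ideal of a Lie algebra 𝔤 with vector space complement 𝔦^c, and projections pr_𝔦: 𝔤 → 𝔦, pr_{𝔦^c}: 𝔤 → 𝔦^c. For a linear map φ: 𝔦 → 𝔦^c, the graph {u + φ(u) : u ∈ 𝔦} is an ideal of 𝔤 if and only if for all x ∈ 𝔤 and u ∈ 𝔦: pr_{𝔦^c}([x, φ(u)]) = φ([x, u]) + φ(pr_𝔦([x, φ(u)])). (Equivalently, φ is a Maurer–Cartan element of the dgL[1]a controlling deformations of 𝔦.) -/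
/-- The graph `{u + φ(u) : u ∈ 𝔦} ⊆ 𝔤` of a linear map `φ : 𝔦 → 𝔦^c`. -/
def graphSet {L : Type*} [LieRing L] [LieAlgebra ℝ L]
    (I : LieIdeal ℝ L) (Ic : Submodule ℝ L) (φ : I →ₗ[ℝ] Ic) : Set L :=
  {z : L | ∃ u : I, z = (u : L) + ((φ u : L))}

/-- Let `𝔦` be an ideal of a Lie algebra `𝔤` with vector space complement `𝔦^c` and
associated projections `pr_𝔦 : 𝔤 → 𝔦`, `pr_{𝔦^c} : 𝔤 → 𝔦^c`. For a linear map
`φ : 𝔦 → 𝔦^c`, the graph `{u + φ(u) : u ∈ 𝔦}` is an ideal of `𝔤` if and only if for all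
`x ∈ 𝔤` and `u ∈ 𝔦`: `pr_{𝔦^c}([x, φu]) = φ([x,u]) + φ(pr_𝔦([x, φu]))`, i.e. `φ` is a
Maurer–Cartan element of the dgL[1]a controlling deformations of the ideal `𝔦`. -/
theorem statement6 {L : Type*} [LieRing L] [LieAlgebra ℝ L]
    (I : LieIdeal ℝ L) (Ic : Submodule ℝ L)
    (pI : L →ₗ[ℝ] I) (pC : L →ₗ[ℝ] Ic)
    (hsum : ∀ z : L, ((pI z : L)) + ((pC z : L)) = z)
    (hI : ∀ u : I, pI (u : L) = u)
    (hC : ∀ v : Ic, pC (v : L) = v)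
    (φ : I →ₗ[ℝ] Ic) :
    (∀ x : L, ∀ y ∈ graphSet I Ic φ, ⁅x, y⁆ ∈ graphSet I Ic φ) ↔
      (∀ (x : L) (u : I),
        pC ⁅x, ((φ u : L))⁆ = φ ⁅x, u⁆ + φ (pI ⁅x, ((φ u : L))⁆)) := by
  -- auxiliary facts about the projections
  have hCI : ∀ u : I, pC (u : L) = 0 := by
    intro u
    have h := hsum (u : L)
    rw [hI u] at h
    have : ((pC (u : L) : L)) = 0 := by
      have := add_eq_left.mp h
      exact this
    exact_mod_cast this
  have hIC : ∀ v : Ic, pI (v : L) = 0 := by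
    intro v
    have h := hsum (v : L)
    rw [hC v] at h
    have : ((pI (v : L) : L)) = 0 := add_eq_right.mp h
    exact_mod_cast this
  constructor
  · intro h x u
    obtain ⟨w, hw⟩ := h x ((u : L) + (φ u : L)) ⟨u, rfl⟩
    rw [lie_add] at hw
    -- apply pI
    have hpI : pI ⁅x, (u : L)⁆ + pI ⁅x, (φ u : L)⁆ = w := by
      have := congrArg pI hw
      simpa [map_add, hI w, hIC (φ w)] using this
    have hbr : pI ⁅x, (u : L)⁆ = ⁅x, u⁆ := hI ⁅x, u⁆
    have hw' : w = ⁅x, u⁆ + pI ⁅x, (φ u : L)⁆ := by rw [← hpI, hbr]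
    -- apply pC
    have hz : pC ⁅x, (u : L)⁆ = 0 := hCI ⁅x, u⁆
    have hpC : pC ⁅x, (φ u : L)⁆ = φ w := by
      have := congrArg pC hw
      simpa [map_add, hz, hCI w, hC (φ w)] using this
    rw [hpC, hw', map_add]
  · intro h x y hy
    obtain ⟨u, rfl⟩ := hy
    refine ⟨⁅x, u⁆ + pI ⁅x, (φ u : L)⁆, ?_⟩
    have h2 : ((pC ⁅x, (φ u : L)⁆ : L)) = (φ ⁅x, u⁆ : L) + (φ (pI ⁅x, (φ u : L)⁆) : L) := by
      rw [h x u]; push_cast; ring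
    push_cast [map_add]
    rw [lie_add]
    conv_lhs => rw [← hsum ⁅x, (φ u : L)⁆]
    rw [h2]
    abel
end

section
/- Let 𝔦 be an ideal of a Lie algebra 𝔤. Then C^•_𝔦(𝔤;𝔤)[1] is closed under the Nijenhuis–Richardson (Gerstenhaber) bracket on Λ^{•+1}𝔤* ⊗ 𝔤: for φ ∈ C^k_𝔦(𝔤;𝔤) and ψ ∈ C^l_𝔦(𝔤;𝔤), the bracket ⟦φ, ψ⟧ lies in C^{k+l-1}_𝔦(𝔤;𝔤). -/
open Finset

/-- The Nijenhuis–Richardson composition of `φ` of arity `r+1` (degree `r`) with `ψ` of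
arity `s+1` (degree `s`): `(φ∘ψ)(x₁,…,x_{r+s+1}) =
Σ_{(s+1, r)-unshuffles τ} sgn(τ) φ(ψ(x_{τ(1)},…,x_{τ(s+1)}), x_{τ(s+2)},…,x_{τ(r+s+1)})`. -/
def nrComp {A : Type*} [AddCommGroup A] (r s : ℕ)
    (φ : (Fin (r + 1) → A) → A) (ψ : (Fin (s + 1) → A) → A) :
    (Fin (r + s + 1) → A) → A := fun x =>
  ∑ σ ∈ Finset.univ.filter (fun σ : Equiv.Perm (Fin (r + s + 1)) =>
      (∀ a b : Fin (r + s + 1), a < b → (b : ℕ) ≤ s → σ a < σ b) ∧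
      (∀ a b : Fin (r + s + 1), a < b → s < (a : ℕ) → σ a < σ b)),
    ((Equiv.Perm.sign σ : ℤ)) •
      φ (Fin.cons
          (ψ (fun i : Fin (s + 1) => x (σ ⟨(i : ℕ), by omega⟩)))
          (fun i : Fin r => x (σ ⟨s + 1 + (i : ℕ), by omega⟩)))

/-- The Nijenhuis–Richardson (Gerstenhaber) bracket of elements of degrees `r` and `s`:
`⟦φ, ψ⟧ = (-1)^{rs} φ∘ψ − ψ∘φ`. -/
def nrBracket {A : Type*} [AddCommGroup A] (r s : ℕ)
    (φ : (Fin (r + 1) → A) → A) (ψ : (Fin (s + 1) → A) → A) :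
    (Fin (r + s + 1) → A) → A := fun x =>
  ((-1 : ℤ) ^ (r * s)) • nrComp r s φ ψ x -
    nrComp s r ψ φ (fun i : Fin (s + r + 1) => x (Fin.cast (by omega) i))

lemma nrComp_mem {L : Type*} [LieRing L] [LieAlgebra ℝ L] (I : LieIdeal ℝ L) (r s : ℕ)
    (f : (Fin (r + 1) → L) → L) (g : (Fin (s + 1) → L) → L)
    (hf : ∀ x, (∃ i, x i ∈ I) → f x ∈ I) (hg : ∀ x, (∃ i, x i ∈ I) → g x ∈ I)
    (x : Fin (r + s + 1) → L) (hx : ∃ i, x i ∈ I) : nrComp r s f g x ∈ I := by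
  obtain ⟨i, hi⟩ := hx
  unfold nrComp
  refine sum_mem fun σ _ => zsmul_mem ?_ _
  set j := σ.symm i with hj
  by_cases h : (j : ℕ) ≤ s
  · refine hf _ ⟨0, ?_⟩
    rw [Fin.cons_zero]
    refine hg _ ⟨⟨(j : ℕ), by omega⟩, ?_⟩
    have e : (⟨((⟨(j : ℕ), by omega⟩ : Fin (s + 1)) : ℕ), by omega⟩ : Fin (r + s + 1)) = j := by
      ext; simp
    rw [e, hj, Equiv.apply_symm_apply]
    exact hi
  · refine hf _ ⟨(⟨(j : ℕ) - (s + 1), by omega⟩ : Fin r).succ, ?_⟩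
    rw [Fin.cons_succ]
    have e : (⟨s + 1 + ((⟨(j : ℕ) - (s + 1), by omega⟩ : Fin r) : ℕ), by omega⟩
        : Fin (r + s + 1)) = j := by
      ext; simp; omega
    rw [e, hj, Equiv.apply_symm_apply]
    exact hi

/-- Let `𝔦` be an ideal of a Lie algebra `𝔤`.  Then `C^•_𝔦(𝔤;𝔤)[1]` is closed under the
Nijenhuis–Richardson bracket: for `φ ∈ C^{r+1}_𝔦(𝔤;𝔤)` and `ψ ∈ C^{s+1}_𝔦(𝔤;𝔤)` (i.e.
taking values in `𝔦` whenever some argument lies in `𝔦`), the bracket `⟦φ, ψ⟧` lies in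
`C^{r+s+1}_𝔦(𝔤;𝔤)`. -/
theorem statement11 {L : Type*} [LieRing L] [LieAlgebra ℝ L] (I : LieIdeal ℝ L)
    (r s : ℕ)
    (φ : AlternatingMap ℝ L L (Fin (r + 1))) (ψ : AlternatingMap ℝ L L (Fin (s + 1)))
    (hφ : ∀ x : Fin (r + 1) → L, (∃ i, x i ∈ I) → φ x ∈ I)
    (hψ : ∀ x : Fin (s + 1) → L, (∃ i, x i ∈ I) → ψ x ∈ I) :
    ∀ x : Fin (r + s + 1) → L, (∃ i, x i ∈ I) → nrBracket r s (⇑φ) (⇑ψ) x ∈ I := by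
  intro x hx
  obtain ⟨i, hi⟩ := hx
  unfold nrBracket
  refine sub_mem (zsmul_mem ?_ _) ?_
  · exact nrComp_mem I r s _ _ hφ hψ x ⟨i, hi⟩
  · exact nrComp_mem I s r _ _ hψ hφ _ ⟨Fin.cast (by omega) i, hi⟩
end

section
/- Let 𝔦 be an ideal of a Lie algebra 𝔤 and η ∈ Hom(𝔦, 𝔤/𝔦) a 0-cocycle (δ^Hom(η) = 0, after a choice of complement identifying 𝔤/𝔦 with 𝔦^c). Define m₂(η,η) ∈ Hom(𝔤, Hom(𝔦, 𝔦^c)) by m₂(η,η)(x,u) = −2η(pr_𝔦[x, η(u)]). Then m₂(η,η) is a 1-cocycle: δ^Hom(m₂(η,η)) = 0. More generally, for η ∈ C⁰, δ^Hom(m₂(η,η)) = 2 m₂(δ^Hom η, η), so the Kuranishi map [η] ↦ ½[m₂(η,η)] is well-defined on cohomology. -/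
variable {L : Type*} [LieRing L] [LieAlgebra ℝ L]

/-- Degree-0 Chevalley–Eilenberg differential `δ^Hom` of the deformation complex of an
ideal `𝔦 ⊴ 𝔤` with chosen complement `𝔦^c` (identifying `𝔤/𝔦 ≅ 𝔦^c`):
`(δη)(x,u) = pr_{𝔦^c}⁅x, η(u)⁆ − η(⁅x,u⁆)`. -/
def delta0 (I : LieIdeal ℝ L) (Ic : Submodule ℝ L) (pC : L →ₗ[ℝ] Ic)
    (η : I →ₗ[ℝ] Ic) (x : L) (u : I) : Ic :=
  pC ⁅x, ((η u : L))⁆ - η ⁅x, u⁆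

/-- The binary bracket on degree-0 elements:
`m₂(ψ,φ)(x,u) = −ψ(pr_𝔦⁅x, φ(u)⁆) − φ(pr_𝔦⁅x, ψ(u)⁆)`. -/
def m2 (I : LieIdeal ℝ L) (Ic : Submodule ℝ L) (pI : L →ₗ[ℝ] I)
    (ψ φ : I →ₗ[ℝ] Ic) (x : L) (u : I) : Ic :=
  -ψ (pI ⁅x, ((φ u : L))⁆) - φ (pI ⁅x, ((ψ u : L))⁆)

/-- Degree-1 Chevalley–Eilenberg differential `δ^Hom` of the deformation complex of an
ideal, on cochains `f : 𝔤 × 𝔦 → 𝔦^c`. -/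
def delta1 (I : LieIdeal ℝ L) (Ic : Submodule ℝ L) (pC : L →ₗ[ℝ] Ic)
    (f : L → I → Ic) (x y : L) (u : I) : Ic :=
  pC ⁅x, ((f y u : L))⁆ - pC ⁅y, ((f x u : L))⁆ + f x ⁅y, u⁆ - f y ⁅x, u⁆ - f ⁅x, y⁆ u

/-- The binary bracket `m₂` of a degree-1 element `ψ` with a degree-0 element `φ`. -/
def m2Mixed (I : LieIdeal ℝ L) (Ic : Submodule ℝ L) (pI : L →ₗ[ℝ] I)
    (ψ : L → I → Ic) (φ : I →ₗ[ℝ] Ic) (x y : L) (u : I) : Ic :=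
  -ψ x (pI ⁅y, ((φ u : L))⁆) + ψ y (pI ⁅x, ((φ u : L))⁆) -
    φ (pI ⁅y, ((ψ x u : L))⁆) + φ (pI ⁅x, ((ψ y u : L))⁆)

/-- Let `𝔦` be an ideal of a Lie algebra `𝔤` with complement `𝔦^c` (projections `pr_𝔦`,
`pr_{𝔦^c}`), identifying `𝔤/𝔦 ≅ 𝔦^c`.  For every `η ∈ C⁰ = Hom(𝔦, 𝔦^c)` one has
`δ^Hom(m₂(η,η)) = 2·m₂(δ^Hom η, η)`; in particular if `η` is a `0`-cocycle then
`m₂(η,η)` is a `1`-cocycle, so the Kuranishi map `[η] ↦ ½[m₂(η,η)]` is well defined on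
cohomology. -/
theorem statement14 (I : LieIdeal ℝ L) (Ic : Submodule ℝ L)
    (pI : L →ₗ[ℝ] I) (pC : L →ₗ[ℝ] Ic)
    (hsum : ∀ z : L, ((pI z : L)) + ((pC z : L)) = z)
    (hI : ∀ u : I, pI (u : L) = u)
    (hC : ∀ v : Ic, pC (v : L) = v)
    (η : I →ₗ[ℝ] Ic) :
    (∀ (x y : L) (u : I),
      delta1 I Ic pC (m2 I Ic pI η η) x y u =
        (2 : ℤ) • m2Mixed I Ic pI (delta0 I Ic pC η) η x y u) ∧
    ((∀ (x : L) (u : I), delta0 I Ic pC η x u = 0) →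
      ∀ (x y : L) (u : I), delta1 I Ic pC (m2 I Ic pI η η) x y u = 0) := by
  have key : ∀ (x z : L), pI ⁅x, ((pC z : L))⁆ = pI ⁅x, z⁆ - ⁅x, pI z⁆ := by
    intro x z
    have h2 : pI ⁅x, ((pI z : L))⁆ = ⁅x, pI z⁆ := hI ⁅x, pI z⁆
    have h3 : pI ⁅x, z⁆ = pI ⁅x, ((pI z : L))⁆ + pI ⁅x, ((pC z : L))⁆ := by
      rw [← map_add, ← lie_add, hsum]
    rw [h3, h2]; abel
  have main : ∀ (x y : L) (u : I),
      delta1 I Ic pC (m2 I Ic pI η η) x y u =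
        (2 : ℤ) • m2Mixed I Ic pI (delta0 I Ic pC η) η x y u := by
    intro x y u
    simp only [delta1, m2, m2Mixed, delta0, AddSubgroupClass.coe_sub, NegMemClass.coe_neg,
      lie_sub, lie_neg, map_sub, map_neg, map_add, key, hI]
    rw [show (⁅⁅x,y⁆,((η u :L))⁆:L) = ⁅x,⁅y,((η u:L))⁆⁆ - ⁅y,⁅x,((η u:L))⁆⁆ from lie_lie x y _]
    simp only [map_sub, map_add]
    abel
  refine ⟨main, fun h x y u => ?_⟩
  rw [main x y u]
  simp [m2Mixed, h]
end

section
/- Let (𝔦_t)_{t∈I} be a smooth deformation of an ideal 𝔦 inside a Lie algebra 𝔤, presented by a smooth curve α: I → GL(𝔤) with α(0) = id and α(t)(𝔦) = 𝔦_t, and suppose the graph presentation 𝔦_t = graph(φ_t) with φ_t = tη + t²ω + O(t³) for linear maps η, ω: 𝔦 → 𝔦^c. Then the ideal condition [𝔤, graph(φ_t)] ⊆ graph(φ_t) for all t implies: (1) pr_{𝔦^c}[x, η(u)] = η([x,u]) for all x ∈ 𝔤, u ∈ 𝔦 (δ^Hom η = 0), and (2) pr_{𝔦^c}[x, ω(u)]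 − η(pr_𝔦[x, η(u)]) − ω([x,u]) = 0 for all x, u, i.e. m₂(η,η) = −2δ^Hom(ω), so the Kuranishi class of η vanishes. -/
/-!
Projecting the ideal condition `[x, u + φ_t u] ∈ graph φ_t` onto `𝔦` and `𝔦^c` gives, for every
`t`, the identity `pr_{𝔦^c}[x, φ_t u] = φ_t([x, u] + pr_𝔦[x, φ_t u])`. Substituting
`φ_t = tη + t²ω + o(t²)` and comparing the coefficients of `t` and `t²` yields both claims. The
only analytic point is that `φ_t(q_t) = o(t²)` whenever `q_t = O(t²)`: since `𝔦` is
finite-dimensional, the pointwise bounds `φ_t e = O(t)` on a basis make `φ_t = O(t)` uniform.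
-/

open Asymptotics Filter Topology

section Asymptotics

variable {α E F : Type*} [NormedAddCommGroup E] [NormedSpace ℝ E]
  [NormedAddCommGroup F] [NormedSpace ℝ F]

lemma isBigO_smul_const {l : Filter α} (g : α → ℝ) (w : F) :
    (fun a => g a • w) =O[l] g :=
  .of_bound ‖w‖ (.of_forall fun a => by rw [norm_smul, mul_comm])

lemma eq_zero_of_pow_smul_isLittleO {k : ℕ} {w : F}
    (h : (fun t : ℝ => t ^ k • w) =o[𝓝 0] fun t => t ^ k) : w = 0 := by
  have hlim := (h.mono (nhdsWithin_le_nhds (s := {0}ᶜ))).tendsto_inv_smul_nhds_zero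
  have hconst : (fun t : ℝ => (t ^ k)⁻¹ • t ^ k • w) =ᶠ[𝓝[≠] 0] fun _ => w := by
    filter_upwards [self_mem_nhdsWithin] with t ht
    rw [smul_smul, inv_mul_cancel₀ (pow_ne_zero k ht), one_smul]
  exact tendsto_nhds_unique tendsto_const_nhds (hlim.congr' hconst)

lemma eq_zero_of_smul_add_sq_smul_isLittleO {w₁ w₂ : F}
    (h : (fun t : ℝ => t • w₁ + t ^ 2 • w₂) =o[𝓝 0] fun t => t ^ 2) : w₁ = 0 ∧ w₂ = 0 := by
  have hw₁ : w₁ = 0 := by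
    refine eq_zero_of_pow_smul_isLittleO (k := 1) ?_
    have hsq : (fun t : ℝ => t ^ 2) =o[𝓝 0] fun t => t ^ 1 := isLittleO_pow_pow one_lt_two
    exact ((h.trans hsq).sub ((isBigO_smul_const _ w₂).trans_isLittleO hsq)).congr_left
      fun t => by simp
  subst hw₁
  exact ⟨rfl, eq_zero_of_pow_smul_isLittleO (by simpa using h)⟩

lemma isBigO_apply_of_isBigO [FiniteDimensional ℝ E] {l : Filter α} {f : α → E →ₗ[ℝ] F}
    {q : α → E} {g g' : α → ℝ} (hf : ∀ e, (fun a => f a e) =O[l] g) (hq : q =O[l] g') :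
    (fun a => f a (q a)) =O[l] fun a => g' a * g a := by
  let b := Module.finBasis ℝ E
  have hcoord : ∀ i, (fun a => b.repr (q a) i) =O[l] g' := fun i =>
    ((LinearMap.toContinuousLinearMap (b.coord i)).isBigO_comp q l).trans hq
  have hexpand : (fun a => f a (q a)) = fun a => ∑ i, b.repr (q a) i • f a (b i) := by
    ext a
    conv_lhs => rw [← b.sum_repr (q a)]
    simp only [map_sum, map_smul]
  rw [hexpand]
  exact .fun_sum fun i _ => (hcoord i).smul (hf (b i))

variable {φ : ℝ → E →ₗ[ℝ] F} {η ω : E →ₗ[ℝ] F}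

lemma isBigO_apply_of_sq_expansion
    (hφ : ∀ e, (fun t : ℝ => φ t e - t • η e - t ^ 2 • ω e) =o[𝓝 0] fun t => t ^ 2) (e : E) :
    (fun t => φ t e) =O[𝓝 0] fun t => t := by
  have hsq : (fun t : ℝ => t ^ 2) =O[𝓝 0] fun t => t := (isLittleO_pow_id one_lt_two).isBigO
  refine (((hφ e).isBigO.trans hsq).add (isBigO_smul_const _ (η e))).add
    ((isBigO_smul_const _ (ω e)).trans hsq) |>.congr_left fun t => ?_
  abel

variable [FiniteDimensional ℝ E]

lemma apply_isLittleO_of_sq_expansion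
    (hφ : ∀ e, (fun t : ℝ => φ t e - t • η e - t ^ 2 • ω e) =o[𝓝 0] fun t => t ^ 2)
    {q : ℝ → E} (hq : q =O[𝓝 0] fun t => t ^ 2) :
    (fun t => φ t (q t)) =o[𝓝 0] fun t => t ^ 2 := by
  refine (isBigO_apply_of_isBigO (isBigO_apply_of_sq_expansion hφ) hq).trans_isLittleO ?_
  simpa only [← pow_succ] using isLittleO_pow_pow (𝕜 := ℝ) (by norm_num : 2 < 3)

lemma apply_sub_sq_smul_isLittleO_of_sq_expansion
    (hφ : ∀ e, (fun t : ℝ => φ t e - t • η e - t ^ 2 • ω e) =o[𝓝 0] fun t => t ^ 2)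
    {p : ℝ → E} {a : E} (hp : (fun t => p t - t • a) =O[𝓝 0] fun t => t ^ 2) :
    (fun t => φ t (p t) - t ^ 2 • η a) =o[𝓝 0] fun t => t ^ 2 := by
  have hcubic : (fun t : ℝ => t ^ 3 • ω a) =o[𝓝 0] fun t => t ^ 2 :=
    (isBigO_smul_const _ _).trans_isLittleO (isLittleO_pow_pow (by norm_num))
  have hscaled : (fun t : ℝ => t • (φ t a - t • η a - t ^ 2 • ω a)) =o[𝓝 0] fun t => t ^ 2 := by
    simpa using
      (isLittleO_id_const (E'' := ℝ) (one_ne_zero (α := ℝ))).isBigO.smul_isLittleO (hφ a)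
  refine ((apply_isLittleO_of_sq_expansion hφ hp).add (hscaled.add hcubic)).congr_left fun t => ?_
  simp only [map_sub, map_smul]
  module

lemma coeffs_eq_of_forall_apply_eq_of_sq_expansion
    (hφ : ∀ e, (fun t : ℝ => φ t e - t • η e - t ^ 2 • ω e) =o[𝓝 0] fun t => t ^ 2)
    (B : F →L[ℝ] E) (C : F →L[ℝ] F) (u e₀ : E)
    (h : ∀ t, C (φ t u) = φ t (e₀ + B (φ t u))) :
    C (η u) = η e₀ ∧ C (ω u) = η (B (η u)) + ω e₀ := by
  have hC : (fun t => C (φ t u) - t • C (η u) - t ^ 2 • C (ω u)) =o[𝓝 0] fun t => t ^ 2 :=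
    (C.isBigO_comp _ _).trans_isLittleO (hφ u) |>.congr_left fun t => by
      simp only [map_sub, map_smul]
  have hB : (fun t => B (φ t u) - t • B (η u)) =O[𝓝 0] fun t => t ^ 2 := by
    refine ((B.isBigO_comp _ _).trans (hφ u).isBigO).add (isBigO_smul_const _ (B (ω u)))
      |>.congr_left fun t => ?_
    simp only [map_sub, map_smul]
    abel
  have hexp := ((hφ e₀).add (apply_sub_sq_smul_isLittleO_of_sq_expansion hφ hB)).sub hC
  obtain ⟨h₁, h₂⟩ := eq_zero_of_smul_add_sq_smul_isLittleO
    (w₁ := C (η u) - η e₀) (w₂ := C (ω u) - η (B (η u)) - ω e₀) <| hexp.congr_left fun t => by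
    rw [h t, map_add]
    module
  rw [sub_sub, sub_eq_zero] at h₂
  exact ⟨sub_eq_zero.1 h₁, h₂⟩

end Asymptotics

section Complement

variable {R M : Type*} [Ring R] [AddCommGroup M] [Module R M] {I Ic : Submodule R M}
  {pI : M →ₗ[R] I} {pC : M →ₗ[R] Ic}

lemma apply_coe_eq_zero_of_add_eq {N N' : Submodule R M} {p : M →ₗ[R] N} {q : M →ₗ[R] N'}
    (hsum : ∀ z : M, (p z : M) + q z = z) (hq : ∀ w : N', q w = w) (w : N') : p w = 0 :=
  Subtype.ext <| add_eq_right.1 <| by simpa only [hq] using hsum w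

lemma pC_eq_apply_pI_of_eq_add (hsum : ∀ z : M, (pI z : M) + pC z = z)
    (hI : ∀ u : I, pI u = u) (hC : ∀ v : Ic, pC v = v) {φ : I →ₗ[R] Ic} {z : M} {v : I}
    (h : z = v + φ v) : pC z = φ (pI z) := by
  have hCI := apply_coe_eq_zero_of_add_eq (fun z => (add_comm _ _).trans (hsum z)) hI
  have hIC := apply_coe_eq_zero_of_add_eq hsum hC
  subst h
  simp only [map_add, hI, hC, hCI, hIC, zero_add, add_zero]

lemma pC_apply_eq_of_map_graph (hsum : ∀ z : M, (pI z : M) + pC z = z)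
    (hI : ∀ u : I, pI u = u) (hC : ∀ v : Ic, pC v = v) {φ : I →ₗ[R] Ic} (A : M →ₗ[R] M)
    {u v : I} (hAu : A u ∈ I) (h : A (u + φ u) = v + φ v) :
    pC (A (φ u)) = φ (⟨A u, hAu⟩ + pI (A (φ u))) := by
  have hCAu : pC (A u) = 0 :=
    apply_coe_eq_zero_of_add_eq (fun z => (add_comm _ _).trans (hsum z)) hI ⟨A u, hAu⟩
  have hIAu : pI (A u) = ⟨A u, hAu⟩ := hI ⟨A u, hAu⟩
  have := pC_eq_apply_pI_of_eq_add hsum hI hC h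
  rwa [map_add, map_add, map_add, hCAu, zero_add, hIAu] at this

end Complement

theorem statement15_general {L : Type*} [NormedAddCommGroup L] [NormedSpace ℝ L]
    [FiniteDimensional ℝ L]
    (β : L →ₗ[ℝ] L →ₗ[ℝ] L)
    (I Ic : Submodule ℝ L)
    (hIdeal : ∀ x z : L, z ∈ I → β x z ∈ I)
    (pI : L →ₗ[ℝ] I) (pC : L →ₗ[ℝ] Ic)
    (hsum : ∀ z : L, ((pI z : L)) + ((pC z : L)) = z)
    (hI : ∀ u : I, pI (u : L) = u)
    (hC : ∀ v : Ic, pC (v : L) = v)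
    (φ : ℝ → (I →ₗ[ℝ] Ic)) (η ω : I →ₗ[ℝ] Ic)
    -- Taylor expansion `φ_t = t η + t² ω + O(t³)`
    (hTaylor : ∀ u : I,
      (fun t : ℝ => ((φ t u : L)) - t • ((η u : L)) - t ^ 2 • ((ω u : L)))
        =o[nhds (0 : ℝ)] fun t => t ^ 2)
    -- `graph(φ_t)` is an ideal of `𝔤` for all `t`
    (hgraph : ∀ (t : ℝ) (x : L) (u : I),
      ∃ v : I, β x ((u : L) + ((φ t u : L))) = (v : L) + ((φ t v : L))) :
    (∀ (x : L) (u : I), pC (β x ((η u : L))) = η ⟨β x (u : L), hIdeal x (u : L) u.2⟩) ∧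
    (∀ (x : L) (u : I),
      pC (β x ((ω u : L))) - η (pI (β x ((η u : L)))) -
        ω ⟨β x (u : L), hIdeal x (u : L) u.2⟩ = 0) ∧
    (∀ (x : L) (u : I),
      (-2 : ℝ) • η (pI (β x ((η u : L)))) =
        (-2 : ℝ) • (pC (β x ((ω u : L))) - ω ⟨β x (u : L), hIdeal x (u : L) u.2⟩)) := by
  have hcoeffs : ∀ (x : L) (u : I),
      pC (β x (η u)) = η ⟨β x u, hIdeal x u u.2⟩ ∧
      pC (β x (ω u)) = η (pI (β x (η u))) + ω ⟨β x u, hIdeal x u u.2⟩ := by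
    intro x u
    have hgraph' (t : ℝ) :
        (pC (β x (φ t u)) : L) = φ t (⟨β x u, hIdeal x u u.2⟩ + pI (β x (φ t u))) := by
      obtain ⟨v, hv⟩ := hgraph t x u
      rw [pC_apply_eq_of_map_graph hsum hI hC (β x) (hIdeal x u u.2) hv]
    obtain ⟨h₁, h₂⟩ := coeffs_eq_of_forall_apply_eq_of_sq_expansion
      (φ := fun t => Ic.subtype ∘ₗ φ t) (η := Ic.subtype ∘ₗ η) (ω := Ic.subtype ∘ₗ ω) hTaylor
      (pI ∘ₗ β x).toContinuousLinearMap (Ic.subtype ∘ₗ pC ∘ₗ β x).toContinuousLinearMap u _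
      hgraph'
    exact ⟨Subtype.ext h₁, Subtype.ext h₂⟩
  refine ⟨fun x u => (hcoeffs x u).1, fun x u => ?_, fun x u => ?_⟩
  · rw [(hcoeffs x u).2]
    abel
  · rw [(hcoeffs x u).2, add_sub_cancel_right]

/-- Let `(𝔤, β)` be a finite-dimensional real Lie algebra (bracket `β`, skew-symmetric and
satisfying Jacobi), `𝔦 ⊆ 𝔤` an ideal with complement `𝔦^c` (projections `pr_𝔦`,
`pr_{𝔦^c}`), and let `(graph(φ_t))_t` be a smooth deformation of `𝔦` through ideals,
with Taylor expansion `φ_t = t·η + t²·ω + o(t²)`.  Then: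
(1) `pr_{𝔦^c}(β(x, η u)) = η(β(x,u))` for all `x ∈ 𝔤`, `u ∈ 𝔦` (i.e. `δ^Hom η = 0`);
(2) `pr_{𝔦^c}(β(x, ω u)) − η(pr_𝔦(β(x, η u))) − ω(β(x,u)) = 0`;
(3) equivalently `m₂(η,η) = −2·δ^Hom(ω)`, so the Kuranishi class of `η` vanishes. -/
theorem statement15 {L : Type*} [NormedAddCommGroup L] [NormedSpace ℝ L]
    [FiniteDimensional ℝ L]
    (β : L →ₗ[ℝ] L →ₗ[ℝ] L)
    (hskew : ∀ x y : L, β x y = -β y x)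
    (hjac : ∀ x y z : L, β (β x y) z + β (β y z) x + β (β z x) y = 0)
    (I Ic : Submodule ℝ L)
    (hIdeal : ∀ x z : L, z ∈ I → β x z ∈ I)
    (pI : L →ₗ[ℝ] I) (pC : L →ₗ[ℝ] Ic)
    (hsum : ∀ z : L, ((pI z : L)) + ((pC z : L)) = z)
    (hI : ∀ u : I, pI (u : L) = u)
    (hC : ∀ v : Ic, pC (v : L) = v)
    (φ : ℝ → (I →ₗ[ℝ] Ic)) (η ω : I →ₗ[ℝ] Ic)
    -- Taylor expansion `φ_t = t η + t² ω + O(t³)`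
    (hTaylor : ∀ u : I,
      (fun t : ℝ => ((φ t u : L)) - t • ((η u : L)) - t ^ 2 • ((ω u : L)))
        =o[nhds (0 : ℝ)] fun t => t ^ 2)
    -- `graph(φ_t)` is an ideal of `𝔤` for all `t`
    (hgraph : ∀ (t : ℝ) (x : L) (u : I),
      ∃ v : I, β x ((u : L) + ((φ t u : L))) = (v : L) + ((φ t v : L))) :
    (∀ (x : L) (u : I), pC (β x ((η u : L))) = η ⟨β x (u : L), hIdeal x (u : L) u.2⟩) ∧
    (∀ (x : L) (u : I),
      pC (β x ((ω u : L))) - η (pI (β x ((η u : L)))) -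
        ω ⟨β x (u : L), hIdeal x (u : L) u.2⟩ = 0) ∧
    (∀ (x : L) (u : I),
      (-2 : ℝ) • η (pI (β x ((η u : L)))) =
        (-2 : ℝ) • (pC (β x ((ω u : L))) - ω ⟨β x (u : L), hIdeal x (u : L) u.2⟩)) :=
  statement15_general β I Ic hIdeal pI pC hsum hI hC φ η ω hTaylor hgraph
end

section
/- Let 𝔤 be a Lie algebra, 𝔥 ⊆ 𝔤 a Lie subalgebra, with complement 𝔥^c. In the graded Lie algebra L = Λ^{•+1}𝔤*⊗𝔤 with the Nijenhuis–Richardson bracket, the subspace ker P = (Λ^{•+1}𝔤*⊗𝔥) ⊕ (⊕_{r+s=•+1, s≥1} Λ^r𝔥* ∧ Λ^s(𝔥^c)* ⊗ 𝔥^c) is a graded Lie subalgebra, where P: L → Λ^{•+1}𝔥*⊗𝔥^c is the projection φ⊗x ↦ (ι*φ)⊗p_{𝔥^c}(x) (ι: 𝔥 ↪ 𝔤 the inclusion). Moreover the image of the inclusion I: Λ^{•+1}𝔥*⊗𝔥^c → L, ψ⊗v ↦ (p_𝔥*ψ)⊗v, is an abelian graded Lie subalgebra, and the Lie bracket μ of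 𝔤 lies in ker P if and only if 𝔥 is a Lie subalgebra. -/
open Finset

variable {L : Type*} [LieRing L] [LieAlgebra ℝ L]

/-- Membership in `ker P`, where `P : Λ^{n}𝔤*⊗𝔤 → Λ^{n}𝔥*⊗𝔥^c` is the projection
`ξ ↦ p_{𝔥^c} ∘ ξ|_𝔥`: `ξ ∈ ker P` iff `p_{𝔥^c}(ξ(h₁,…,h_n)) = 0` whenever all `h_i ∈ 𝔥`.
This is exactly the subspace
`(Λ^n𝔤*⊗𝔥) ⊕ (⊕_{p+q=n, q≥1} Λ^p𝔥*∧Λ^q(𝔥^c)* ⊗ 𝔥^c)`. -/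
def inKerP (H Hc : Submodule ℝ L) (pC : L →ₗ[ℝ] Hc) {n : ℕ}
    (ξ : (Fin n → L) → L) : Prop :=
  ∀ x : Fin n → L, (∀ i, x i ∈ H) → pC (ξ x) = 0

/-- Membership in the image of the inclusion `I : Λ^n𝔥*⊗𝔥^c → Λ^n𝔤*⊗𝔤`,
`ψ⊗v ↦ (p_𝔥^*ψ)⊗v`: `ξ` takes values in `𝔥^c` and only depends on the `𝔥`-components of
its arguments. -/
def inImageI (H Hc : Submodule ℝ L) (pH : L →ₗ[ℝ] H) {n : ℕ}
    (ξ : (Fin n → L) → L) : Prop :=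
  (∀ x : Fin n → L, ξ x ∈ Hc) ∧
    (∀ x : Fin n → L, ξ x = ξ (fun i => ((pH (x i) : L))))

/-!
Under the splitting `𝔤 = 𝔥 ⊕ 𝔥^c`, `ker P` consists exactly of the cochains sending `𝔥`-tuples
into `𝔥`. Every term of the Nijenhuis–Richardson composition `φ ∘ ψ` evaluates `φ` on `ψ(…)` and
arguments of the original tuple, so that property is inherited by `φ ∘ ψ` and hence by the
bracket. A cochain in the image of `I` takes values in `𝔥^c` and kills `𝔥^c` in every slot, so
each term `φ(ψ(…), …)` of a composition of two such cochains vanishes: the image is abelian.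
-/

section Composition

variable {A : Type*} [AddCommGroup A] {a b : ℕ}
  {φ : (Fin (a + 1) → A) → A} {χ : (Fin (b + 1) → A) → A}

theorem nrComp_mem_s16 (S : AddSubgroup A)
    (hφ : ∀ y, (∀ i, y i ∈ S) → φ y ∈ S) (hχ : ∀ y, (∀ i, y i ∈ S) → χ y ∈ S)
    {y : Fin (a + b + 1) → A} (hy : ∀ i, y i ∈ S) : nrComp a b φ χ y ∈ S := by
  refine S.sum_mem fun σ _ => S.zsmul_mem (hφ _ fun i => ?_) _
  refine Fin.cases ?_ (fun j => ?_) i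
  · simpa only [Fin.cons_zero] using hχ _ fun _ => hy _
  · simpa only [Fin.cons_succ] using hy _

theorem nrBracket_mem (S : AddSubgroup A)
    (hφ : ∀ y, (∀ i, y i ∈ S) → φ y ∈ S) (hχ : ∀ y, (∀ i, y i ∈ S) → χ y ∈ S)
    {y : Fin (a + b + 1) → A} (hy : ∀ i, y i ∈ S) : nrBracket a b φ χ y ∈ S :=
  S.sub_mem (S.zsmul_mem (nrComp_mem_s16 S hφ hχ hy) _) (nrComp_mem_s16 S hχ hφ fun _ => hy _)

theorem nrComp_eq_zero (h : ∀ v w, φ (Fin.cons (χ v) w) = 0) (y : Fin (a + b + 1) → A) :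
    nrComp a b φ χ y = 0 :=
  Finset.sum_eq_zero fun σ _ => by rw [h, smul_zero]

theorem nrBracket_eq_zero (hφχ : ∀ v w, φ (Fin.cons (χ v) w) = 0)
    (hχφ : ∀ v w, χ (Fin.cons (φ v) w) = 0) (y : Fin (a + b + 1) → A) :
    nrBracket a b φ χ y = 0 := by
  rw [nrBracket, nrComp_eq_zero hφχ, nrComp_eq_zero hχφ, smul_zero, sub_zero]

end Composition

section Splitting

variable {H Hc : Submodule ℝ L} {pH : L →ₗ[ℝ] H} {pC : L →ₗ[ℝ] Hc}

theorem pC_eq_zero_iff (hsum : ∀ z : L, ((pH z : L)) + ((pC z : L)) = z)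
    (hH : ∀ u : H, pH (u : L) = u) {z : L} : pC z = 0 ↔ z ∈ H := by
  constructor
  · intro hz
    rw [← hsum z, hz, ZeroMemClass.coe_zero, add_zero]
    exact (pH z).2
  · intro hz
    have hpH : (pH z : L) = z := congrArg Subtype.val (hH ⟨z, hz⟩)
    exact Subtype.ext (add_eq_left.mp ((hsum z).trans hpH.symm))

theorem pH_eq_zero_of_mem (hsum : ∀ z : L, ((pH z : L)) + ((pC z : L)) = z)
    (hC : ∀ v : Hc, pC (v : L) = v) {z : L} (hz : z ∈ Hc) : (pH z : L) = 0 := by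
  have hpC : (pC z : L) = z := congrArg Subtype.val (hC ⟨z, hz⟩)
  exact add_eq_right.mp ((hsum z).trans hpC.symm)

theorem inKerP_iff (hsum : ∀ z : L, ((pH z : L)) + ((pC z : L)) = z)
    (hH : ∀ u : H, pH (u : L) = u) {n : ℕ} (ξ : (Fin n → L) → L) :
    inKerP H Hc pC ξ ↔ ∀ x, (∀ i, x i ∈ H) → ξ x ∈ H := by
  simp only [inKerP, pC_eq_zero_iff hsum hH]

theorem apply_cons_eq_zero_of_inImageI (hsum : ∀ z : L, ((pH z : L)) + ((pC z : L)) = z)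
    (hC : ∀ v : Hc, pC (v : L) = v) {n : ℕ} {φ : AlternatingMap ℝ L L (Fin (n + 1))}
    (hφ : inImageI H Hc pH φ) {z : L} (hz : z ∈ Hc) (w : Fin n → L) :
    φ (Fin.cons z w) = 0 := by
  rw [hφ.2]
  exact φ.map_coord_zero 0 (by simpa only [Fin.cons_zero] using pH_eq_zero_of_mem hsum hC hz)

end Splitting

/-- Let `𝔥 ⊆ 𝔤` be a subspace with complement `𝔥^c` (projections `p_𝔥`, `p_{𝔥^c}`).
In the graded Lie algebra `Λ^{•+1}𝔤*⊗𝔤` with the Nijenhuis–Richardson bracket: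
(a) `ker P` is a graded Lie subalgebra;
(b) the image of the inclusion `I : Λ^{•+1}𝔥*⊗𝔥^c → Λ^{•+1}𝔤*⊗𝔤` is abelian;
(c) the Lie bracket `μ` of `𝔤` lies in `ker P` iff `𝔥` is a Lie subalgebra of `𝔤`. -/
theorem statement16 (H Hc : Submodule ℝ L)
    (pH : L →ₗ[ℝ] H) (pC : L →ₗ[ℝ] Hc)
    (hsum : ∀ z : L, ((pH z : L)) + ((pC z : L)) = z)
    (hH : ∀ u : H, pH (u : L) = u)
    (hC : ∀ v : Hc, pC (v : L) = v) :
    -- (a) `ker P` is closed under the Nijenhuis–Richardson bracket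
    (∀ (r s : ℕ) (ξ : AlternatingMap ℝ L L (Fin (r + 1)))
        (ψ : AlternatingMap ℝ L L (Fin (s + 1))),
      inKerP H Hc pC (⇑ξ) → inKerP H Hc pC (⇑ψ) →
        inKerP H Hc pC (nrBracket r s (⇑ξ) (⇑ψ))) ∧
    -- (b) the image of `I` is an abelian graded Lie subalgebra
    (∀ (r s : ℕ) (ξ : AlternatingMap ℝ L L (Fin (r + 1)))
        (ψ : AlternatingMap ℝ L L (Fin (s + 1))),
      inImageI H Hc pH (⇑ξ) → inImageI H Hc pH (⇑ψ) →
        ∀ x : Fin (r + s + 1) → L, nrBracket r s (⇑ξ) (⇑ψ) x = 0) ∧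
    -- (c) `μ ∈ ker P` iff `𝔥` is a Lie subalgebra
    (inKerP H Hc pC (fun x : Fin 2 → L => ⁅x 0, x 1⁆) ↔
      ∀ u v : L, u ∈ H → v ∈ H → ⁅u, v⁆ ∈ H) := by
  refine ⟨fun r s ξ ψ hξ hψ => ?_, fun r s ξ ψ hξ hψ => ?_, ?_⟩
  · rw [inKerP_iff hsum hH] at hξ hψ ⊢
    exact fun x hx => nrBracket_mem H.toAddSubgroup hξ hψ hx
  · exact nrBracket_eq_zero
      (fun v w => apply_cons_eq_zero_of_inImageI hsum hC hξ (hψ.1 v) w)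
      (fun v w => apply_cons_eq_zero_of_inImageI hsum hC hψ (hξ.1 v) w)
  · rw [inKerP_iff hsum hH]
    refine ⟨fun h u v hu hv => ?_, fun h x hx => h _ _ (hx 0) (hx 1)⟩
    simpa using h ![u, v] (Fin.forall_fin_two.mpr ⟨hu, hv⟩)
end
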